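/- arXiv:1601.04280 — 4 statements merged into one kernel-verified Lean document; each statement's English description precedes it below -/
import Mathlib

section
/- Let A be an m × n complex matrix, Ω a k × n complex matrix, and suppose A·Ω* = Q·R where Q is an m × k matrix with orthonormal columns (Q*Q = I_k) and R is a k × k matrix. Then for every k × n complex matrix X, ‖A − Q Q* A‖_F ≤ ‖A Ω* X − A‖_F. -/
open Matrix

/-- The Frobenius norm of a complex matrix. -/
noncomputable def frobNorm {m n : ℕ} (A : Matrix (Fin m) (Fin n) ℂ) : ℝ :=
  Real.sqrt (∑ i, ∑ j, ‖A i j‖ ^ 2)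

lemma frob_key {m n : ℕ} (B C : Matrix (Fin m) (Fin n) ℂ) (h : Bᴴ * C = 0) :
    (∑ i, ∑ j, ‖C i j‖ ^ 2) ≤ ∑ i, ∑ j, ‖(B + C) i j‖ ^ 2 := by
  have hcross : (∑ i, ∑ j, ((starRingEnd ℂ) (B i j) * C i j).re) = 0 := by
    rw [Finset.sum_comm]
    have : ∀ j : Fin n, (∑ i, ((starRingEnd ℂ) (B i j) * C i j).re) = 0 := by
      intro j
      have h0 : (Bᴴ * C) j j = 0 := by rw [h]; rfl
      have : (∑ i, (starRingEnd ℂ) (B i j) * C i j) = 0 := by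
        simpa [Matrix.mul_apply, Matrix.conjTranspose_apply] using h0
      calc (∑ i, ((starRingEnd ℂ) (B i j) * C i j).re)
          = (∑ i, (starRingEnd ℂ) (B i j) * C i j).re := by
            rw [Complex.re_sum]
        _ = 0 := by rw [this]; simp
    exact Finset.sum_eq_zero fun j _ => this j
  have expand : ∀ (b c : ℂ), ‖b + c‖ ^ 2 = ‖b‖ ^ 2 + ‖c‖ ^ 2 + 2 * ((starRingEnd ℂ) b * c).re := by
    intro b c
    have h1 : ∀ z : ℂ, ‖z‖ ^ 2 = Complex.normSq z := by
      intro z; rw [Complex.normSq_eq_norm_sq]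
    rw [h1, h1, h1, Complex.normSq_add]
    simp [Complex.mul_re, Complex.normSq_apply]
  have : (∑ i, ∑ j, ‖(B + C) i j‖ ^ 2)
      = (∑ i, ∑ j, ‖B i j‖ ^ 2) + (∑ i, ∑ j, ‖C i j‖ ^ 2)
        + 2 * (∑ i, ∑ j, ((starRingEnd ℂ) (B i j) * C i j).re) := by
    simp only [Matrix.add_apply, expand, Finset.sum_add_distrib, Finset.mul_sum]
  rw [this, hcross]
  have hB : 0 ≤ ∑ i, ∑ j, ‖B i j‖ ^ 2 :=
    Finset.sum_nonneg fun i _ => Finset.sum_nonneg fun j _ => by positivity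
  linarith

/-- If `A Ωᴴ = Q R` with `Q` having orthonormal columns, then `Q Qᴴ A` approximates `A`
at least as well (in Frobenius norm) as any `A Ωᴴ X`. -/
theorem QR_projection_best {m n k : ℕ} (A : Matrix (Fin m) (Fin n) ℂ)
    (Ω : Matrix (Fin k) (Fin n) ℂ)
    (Q : Matrix (Fin m) (Fin k) ℂ) (R : Matrix (Fin k) (Fin k) ℂ)
    (hQR : A * Ωᴴ = Q * R) (hQ : Qᴴ * Q = 1)
    (X : Matrix (Fin k) (Fin n) ℂ) :
    frobNorm (A - Q * Qᴴ * A) ≤ frobNorm (A * Ωᴴ * X - A) := by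
  set B : Matrix (Fin m) (Fin n) ℂ := Q * (R * X - Qᴴ * A) with hB
  set C : Matrix (Fin m) (Fin n) ℂ := Q * Qᴴ * A - A with hC
  have hBC : B + C = Q * R * X - A := by
    rw [hB, hC, Matrix.mul_sub, ← Matrix.mul_assoc, ← Matrix.mul_assoc]
    abel
  have hsum : A * Ωᴴ * X - A = B + C := by rw [hBC, hQR]
  have horth : Bᴴ * C = 0 := by
    rw [hB, hC, Matrix.conjTranspose_mul]
    have : Qᴴ * (Q * Qᴴ * A - A) = 0 := by
      rw [Matrix.mul_sub]
      rw [show Qᴴ * (Q * Qᴴ * A) = (Qᴴ * Q) * (Qᴴ * A) by simp [Matrix.mul_assoc], hQ,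
        Matrix.one_mul, sub_self]
    rw [Matrix.mul_assoc, this, Matrix.mul_zero]
  have hkey := frob_key B C horth
  rw [← hsum] at hkey
  have hCC : (∑ i, ∑ j, ‖(A - Q * Qᴴ * A) i j‖ ^ 2) = ∑ i, ∑ j, ‖C i j‖ ^ 2 := by
    apply Finset.sum_congr rfl; intro i _
    apply Finset.sum_congr rfl; intro j _
    have : (A - Q * Qᴴ * A) i j = -(C i j) := by
      rw [hC]; simp [Matrix.sub_apply]
    rw [this, norm_neg]
  unfold frobNorm
  apply Real.sqrt_le_sqrt
  rw [hCC]
  exact hkey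
end

section
/- Let A and P·A be m × n complex matrices (P an m × m matrix), L₁ an m × k complex matrix, Ω₂ a q × m complex matrix, and M a k × q complex matrix satisfying M·(Ω₂·L₁) = I_k (a left inverse of Ω₂·L₁). Then for every k × m complex matrix N, ‖L₁·M·Ω₂·(P·A) − P·A‖_F ≤ (‖L₁·M·Ω₂‖₂ + 1)·‖P·A − L₁·N·(P·A)‖_F. -/
/-!
Because `T = L₁ M Ω₂` fixes `L₁` (`T L₁ = L₁`), the residual `T X - X` of `X = P A` equals
`T E - E` for the error `E = X - L₁ N X` of any other approximation from the range of `L₁`.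
Applying `T` to `E` column by column costs at most a factor `‖T‖₂` in Frobenius norm, and the
triangle inequality adds the `+ 1`.
-/

open Matrix

noncomputable def opNorm {m n : ℕ} (A : Matrix (Fin m) (Fin n) ℂ) : ℝ :=
  ‖LinearMap.toContinuousLinearMap (Matrix.toEuclideanLin A)‖

theorem Matrix.mul_sub_self_eq_of_mul_eq {R : Type*} [Ring R] {m k n : Type*} [Fintype m]
    [Fintype k] {T : Matrix m m R} {L : Matrix m k R} (hTL : T * L = L) (X : Matrix m n R)
    (C : Matrix k n R) : T * X - X = T * (X - L * C) - (X - L * C) := by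
  rw [Matrix.mul_sub, ← Matrix.mul_assoc, hTL]
  abel

section Frobenius

attribute [local instance] Matrix.frobeniusNormedAddCommGroup

variable {𝕜 : Type*} [RCLike 𝕜] {l m n : Type*} [Fintype l] [Fintype m] [Fintype n]

theorem Matrix.frobenius_norm_sq_eq_sum_col (A : Matrix m n 𝕜) :
    ‖A‖ ^ 2 = ∑ j, ‖(WithLp.toLp 2 (Aᵀ j) : EuclideanSpace 𝕜 m)‖ ^ 2 := by
  rw [← frobenius_norm_transpose, frobenius_norm_def, ← Real.sqrt_eq_rpow,
    Real.sq_sqrt (by positivity)]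
  simp only [EuclideanSpace.norm_sq_eq, Real.rpow_two]

theorem Matrix.frobenius_norm_mul_le_opNorm_mul [DecidableEq m] (B : Matrix l m 𝕜)
    (E : Matrix m n 𝕜) :
    ‖B * E‖ ≤ ‖LinearMap.toContinuousLinearMap (toEuclideanLin B)‖ * ‖E‖ := by
  set β := ‖LinearMap.toContinuousLinearMap (toEuclideanLin B)‖
  have hcol (j : n) : ‖(WithLp.toLp 2 ((B * E)ᵀ j) : EuclideanSpace 𝕜 l)‖ ≤
      β * ‖(WithLp.toLp 2 (Eᵀ j) : EuclideanSpace 𝕜 m)‖ :=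
    (LinearMap.toContinuousLinearMap (toEuclideanLin B)).le_opNorm (WithLp.toLp 2 (Eᵀ j))
  rw [← sq_le_sq₀ (norm_nonneg _) (by positivity), mul_pow, frobenius_norm_sq_eq_sum_col,
    frobenius_norm_sq_eq_sum_col, Finset.mul_sum]
  gcongr with j
  rw [← mul_pow]
  exact pow_le_pow_left₀ (norm_nonneg _) (hcol j) 2

theorem frobNorm_eq_frobenius_norm {m n : ℕ} (A : Matrix (Fin m) (Fin n) ℂ) :
    frobNorm A = ‖A‖ := by
  simp only [frobNorm, frobenius_norm_def, Real.sqrt_eq_rpow, Real.rpow_two]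

theorem frobNorm_mul_sub_self_le {m n : ℕ} (T : Matrix (Fin m) (Fin m) ℂ)
    (E : Matrix (Fin m) (Fin n) ℂ) : frobNorm (T * E - E) ≤ (opNorm T + 1) * frobNorm E := by
  simp only [frobNorm_eq_frobenius_norm]
  calc ‖T * E - E‖ ≤ ‖T * E‖ + ‖E‖ := norm_sub_le _ _
    _ ≤ opNorm T * ‖E‖ + ‖E‖ := by gcongr; exact frobenius_norm_mul_le_opNorm_mul T E
    _ = (opNorm T + 1) * ‖E‖ := by ring

end Frobenius

theorem oblique_projection_bound {m n k q : ℕ}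
    (A : Matrix (Fin m) (Fin n) ℂ) (P : Matrix (Fin m) (Fin m) ℂ)
    (L₁ : Matrix (Fin m) (Fin k) ℂ) (Ω₂ : Matrix (Fin q) (Fin m) ℂ)
    (M : Matrix (Fin k) (Fin q) ℂ) (hM : M * (Ω₂ * L₁) = 1)
    (N : Matrix (Fin k) (Fin m) ℂ) :
    frobNorm (L₁ * M * Ω₂ * (P * A) - P * A) ≤
      (opNorm (L₁ * M * Ω₂) + 1) * frobNorm (P * A - L₁ * N * (P * A)) := by
  have hL₁ : L₁ * M * Ω₂ * L₁ = L₁ := by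
    rw [Matrix.mul_assoc, Matrix.mul_assoc, hM, Matrix.mul_one]
  rw [mul_sub_self_eq_of_mul_eq hL₁ (P * A) (N * (P * A)), ← Matrix.mul_assoc L₁ N]
  exact frobNorm_mul_sub_self_le _ _
end

section
/- Let A be an m × n complex matrix, Ω a k × n complex matrix, and P an m × m permutation matrix. Suppose P·A·Ω* = L·U₁ where L is an m × k complex matrix with linearly independent columns and U₁ is an invertible k × k matrix. Then for every k × n complex matrix X, ‖P·A − L·(L*L)⁻¹·L*·(P·A)‖_F ≤ ‖(P·A)·Ω*·X − P·A‖_F. (Here L·(L*L)⁻¹·L* is the orthogonal projection onto the column space of L, which coincides with L·L†·(P·A) for the Moore–Penrose pseudoinverse L†.) -/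
/-!
Write `B = P A` and `N = B - L (LᴴL)⁻¹ Lᴴ B`; then `Lᴴ N = 0`. Since `B Ωᴴ X = L (U₁ X)` lies in the
range of `L`, the error `B Ωᴴ X - B` splits as `M - N` with `M` in the range of `L`, so `Mᴴ N = 0`
and Pythagoras for the Frobenius norm gives `‖N‖_F ≤ ‖M - N‖_F`.
-/

open Matrix

theorem frobNorm_nonneg {m n : ℕ} (A : Matrix (Fin m) (Fin n) ℂ) : 0 ≤ frobNorm A :=
  Real.sqrt_nonneg _

theorem frobNorm_sq_eq_re_trace {m n : ℕ} (A : Matrix (Fin m) (Fin n) ℂ) :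
    frobNorm A ^ 2 = (Aᴴ * A).trace.re := by
  rw [frobNorm, Real.sq_sqrt (by positivity), Finset.sum_comm]
  simp [trace, mul_apply, Complex.re_sum, Complex.mul_re, ← sq, Complex.sq_norm, Complex.normSq_apply]

theorem frobNorm_sub_sq_of_conjTranspose_mul_eq_zero {m n : ℕ}
    {M N : Matrix (Fin m) (Fin n) ℂ} (h : Mᴴ * N = 0) :
    frobNorm (M - N) ^ 2 = frobNorm M ^ 2 + frobNorm N ^ 2 := by
  have h' : Nᴴ * M = 0 := by
    rw [← conjTranspose_conjTranspose M, ← conjTranspose_mul, h, conjTranspose_zero]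
  simp only [frobNorm_sq_eq_re_trace, conjTranspose_sub, Matrix.sub_mul, Matrix.mul_sub, h, h',
    trace_sub, trace_zero, Complex.sub_re, Complex.zero_re]
  ring

theorem frobNorm_le_frobNorm_sub_of_conjTranspose_mul_eq_zero {m n : ℕ}
    {M N : Matrix (Fin m) (Fin n) ℂ} (h : Mᴴ * N = 0) :
    frobNorm N ≤ frobNorm (M - N) := by
  rw [← sq_le_sq₀ (frobNorm_nonneg _) (frobNorm_nonneg _),
    frobNorm_sub_sq_of_conjTranspose_mul_eq_zero h]
  exact le_add_of_nonneg_left (sq_nonneg _)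

theorem conjTranspose_mul_sub_proj_eq_zero {R m n k : Type*} [CommRing R] [StarRing R]
    [Fintype m] [Fintype k] [DecidableEq k] {L : Matrix m k R} (hL : IsUnit (Lᴴ * L))
    (B : Matrix m n R) :
    Lᴴ * (B - L * (Lᴴ * L)⁻¹ * Lᴴ * B) = 0 := by
  rw [Matrix.mul_sub, sub_eq_zero, eq_comm]
  calc Lᴴ * (L * (Lᴴ * L)⁻¹ * Lᴴ * B) = (Lᴴ * L) * (Lᴴ * L)⁻¹ * (Lᴴ * B) := by
        simp only [Matrix.mul_assoc]
    _ = Lᴴ * B := by rw [mul_nonsing_inv _ ((isUnit_iff_isUnit_det _).mp hL), Matrix.one_mul]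

theorem frobNorm_sub_proj_le {m n k : ℕ} {L : Matrix (Fin m) (Fin k) ℂ} (hL : IsUnit (Lᴴ * L))
    (B : Matrix (Fin m) (Fin n) ℂ) (Y : Matrix (Fin k) (Fin n) ℂ) :
    frobNorm (B - L * (Lᴴ * L)⁻¹ * Lᴴ * B) ≤ frobNorm (L * Y - B) := by
  set N := B - L * (Lᴴ * L)⁻¹ * Lᴴ * B
  set M := L * (Y - (Lᴴ * L)⁻¹ * Lᴴ * B)
  have hMN : Mᴴ * N = 0 := by
    rw [conjTranspose_mul, Matrix.mul_assoc, conjTranspose_mul_sub_proj_eq_zero hL, Matrix.mul_zero]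
  have hLY : L * Y - B = M - N := by
    simp only [M, N, Matrix.mul_sub, Matrix.mul_assoc]
    abel
  rw [hLY]
  exact frobNorm_le_frobNorm_sub_of_conjTranspose_mul_eq_zero hMN

theorem LU_projection_best_general {m n k : ℕ}
    (A : Matrix (Fin m) (Fin n) ℂ) (Ω : Matrix (Fin k) (Fin n) ℂ)
    (P : Matrix (Fin m) (Fin m) ℂ)
    (L : Matrix (Fin m) (Fin k) ℂ) (U₁ : Matrix (Fin k) (Fin k) ℂ)
    (hLU : P * A * Ωᴴ = L * U₁)
    (hL : IsUnit (Lᴴ * L))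
    (X : Matrix (Fin k) (Fin n) ℂ) :
    frobNorm (P * A - L * (Lᴴ * L)⁻¹ * Lᴴ * (P * A)) ≤
      frobNorm ((P * A) * Ωᴴ * X - P * A) := by
  rw [hLU, Matrix.mul_assoc L U₁ X]
  exact frobNorm_sub_proj_le hL (P * A) (U₁ * X)

/-- If `P A Ωᴴ = L U₁` with `L` having linearly independent columns (`Lᴴ L` invertible)
and `U₁` invertible, then the orthogonal projection of `P A` onto the column space of `L`
approximates `P A` at least as well as any `(P A) Ωᴴ X`. -/
theorem LU_projection_best {m n k : ℕ}
    (A : Matrix (Fin m) (Fin n) ℂ) (Ω : Matrix (Fin k) (Fin n) ℂ)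
    (P : Matrix (Fin m) (Fin m) ℂ)
    (hP : ∃ σ : Equiv.Perm (Fin m), ∀ i j, P i j = if σ i = j then 1 else 0)
    (L : Matrix (Fin m) (Fin k) ℂ) (U₁ : Matrix (Fin k) (Fin k) ℂ)
    (hLU : P * A * Ωᴴ = L * U₁)
    (hL : IsUnit (Lᴴ * L)) (hU₁ : IsUnit U₁)
    (X : Matrix (Fin k) (Fin n) ℂ) :
    frobNorm (P * A - L * (Lᴴ * L)⁻¹ * Lᴴ * (P * A)) ≤
      frobNorm ((P * A) * Ωᴴ * X - P * A) :=
  LU_projection_best_general A Ω P L U₁ hLU hL X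
end

section
/- Let m, l, r be positive integers and 0 < ε < 1, 0 < δ < 1 with l ≥ δ⁻¹·(r² + r)/(2ε − ε²)². Let the random l × m sparse embedding matrix S be generated as follows: choose h : {1,…,m} → {1,…,l} uniformly at random (each h(i) independent and uniform on {1,…,l}) and independent uniform random signs σ₁,…,σ_m ∈ {−1,+1}; set S_{h(i),i} = σ_i for each i and all other entries 0. Then for every fixed m × r real matrix U with orthonormal columns (UᵀU = I_r), with probability at least 1 − δ, every singular value of S·U lies in the interval [1 − ε, 1 + ε]; equivalently, with probability at least 1 − δ, for every x ∈ ℝʳ one has (1 − ε)·‖x‖₂ ≤ ‖S·U·x‖₂ ≤ (1 + ε)·‖x‖₂. -/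
open Matrix

/-- The random `l × m` sparse embedding matrix determined by a hash function
`h : Fin m → Fin l` and signs `s : Fin m → Bool` (where `true ↦ +1`, `false ↦ -1`):
its `(h j, j)` entry is the sign `s j` and all other entries are `0`. -/
def semOf {l m : ℕ} (h : Fin m → Fin l) (s : Fin m → Bool) :
    Matrix (Fin l) (Fin m) ℝ :=
  Matrix.of fun i j => if h j = i then (if s j then 1 else -1) else 0

/-! Put `A = S U`. If the squared Frobenius norm of `AᵀA - 1` is at most `t²`, `t = 2ε - ε²`, then
`|‖A x‖² - ‖x‖²| ≤ t ‖x‖²` by Cauchy–Schwarz, and `(1 - ε)² = 1 - t`, `(1 + ε)² ≥ 1 + t`.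
Since every column of `S` is a signed unit vector, `SᵀS = 1 + C` where `C` only has the
off-diagonal entries `C j j' = σ j σ j'` at hash collisions `h j = h j'`, so `AᵀA - 1 = Uᵀ C U`.
The entries `C j j'` are uncorrelated except for `C j j' = C j' j`, each with second moment
`1 / l`, which gives `E ‖Uᵀ C U‖²_F ≤ (r² + r) / l`; Markov's inequality concludes. -/

noncomputable def boolSign (b : Bool) : ℝ := if b then 1 else -1

@[simp]
lemma boolSign_mul_self (b : Bool) : boolSign b * boolSign b = 1 := by
  cases b <;> simp [boolSign]

@[simp]
lemma boolSign_not (b : Bool) : boolSign (!b) = -boolSign b := by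
  cases b <;> simp [boolSign]

section Signs

variable {α : Type*} [Fintype α] [DecidableEq α]

lemma sum_boolSign_mul_eq_zero {a b c d : α} (hb : a ≠ b) (hc : a ≠ c) (hd : a ≠ d) :
    ∑ s : α → Bool, boolSign (s a) * boolSign (s b) * (boolSign (s c) * boolSign (s d)) = 0 := by
  have hflip := Equiv.sum_comp
    (Function.Involutive.toPerm (fun s : α → Bool => Function.update s a (!s a)) fun s => by simp)
    (fun s => boolSign (s a) * boolSign (s b) * (boolSign (s c) * boolSign (s d)))
  simp only [Function.Involutive.toPerm, Equiv.coe_fn_mk, Function.update_self, boolSign_not,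
    Function.update_of_ne hb.symm, Function.update_of_ne hc.symm, Function.update_of_ne hd.symm,
    neg_mul, Finset.sum_neg_distrib, neg_eq_self] at hflip
  exact hflip

lemma sum_boolSign_pair_mul_pair {a b c d : α} (hab : a ≠ b) :
    ∑ s : α → Bool, boolSign (s a) * boolSign (s b) * (boolSign (s c) * boolSign (s d)) =
      if (c, d) = (a, b) ∨ (c, d) = (b, a) then (Fintype.card (α → Bool) : ℝ) else 0 := by
  split_ifs with hmatch
  · have hsq : ∀ s : α → Bool,
        boolSign (s a) * boolSign (s b) * (boolSign (s c) * boolSign (s d)) = 1 := by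
      rcases hmatch with h | h <;> simp only [Prod.mk.injEq] at h <;> obtain ⟨rfl, rfl⟩ := h <;>
        intro s <;> linear_combination
          boolSign (s c) * boolSign (s c) * boolSign_mul_self (s d) + boolSign_mul_self (s c)
    simp [hsq]
  · by_cases ha : a = c ∨ a = d
    · have hb : b ≠ c ∧ b ≠ d := by grind
      rw [← sum_boolSign_mul_eq_zero (a := b) hab.symm hb.1 hb.2]
      exact Finset.sum_congr rfl fun s _ => by ring
    · push Not at ha
      exact sum_boolSign_mul_eq_zero hab ha.1 ha.2

end Signs

lemma sum_ite_apply_eq_apply {α β : Type*} [Fintype α] [DecidableEq α] [Fintype β]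
    [DecidableEq β] [Nonempty β] {a b : α} (hab : a ≠ b) :
    ∑ h : α → β, (if h a = h b then 1 else 0 : ℝ) =
      (Fintype.card (α → β) : ℝ) / Fintype.card β := by
  rw [← (Equiv.funSplitAt a β).symm.sum_comp, Fintype.sum_prod_type, Finset.sum_comm]
  have hb : b ≠ a := hab.symm
  simp only [Equiv.funSplitAt_symm_apply, dif_pos, dif_neg hb]
  rw [Fintype.card_congr (Equiv.funSplitAt a β), Fintype.card_prod, Nat.cast_mul,
    mul_div_cancel_left₀ _ (Nat.cast_ne_zero.2 Fintype.card_ne_zero)]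
  simp

section Collision

variable {α β : Type*} [DecidableEq α] [DecidableEq β]

noncomputable def collisionMatrix (h : α → β) (s : α → Bool) : Matrix α α ℝ :=
  of fun j j' => if j ≠ j' ∧ h j = h j' then boolSign (s j) * boolSign (s j') else 0

lemma transpose_semOf_mul_semOf {l m : ℕ} (h : Fin m → Fin l) (s : Fin m → Bool) :
    (semOf h s)ᵀ * semOf h s = 1 + collisionMatrix h s := by
  have hsemOf : ∀ i j, semOf h s i j = if h j = i then boolSign (s j) else 0 := fun _ _ => rfl
  ext j j'
  simp only [Matrix.mul_apply, transpose_apply, hsemOf, ite_mul, mul_ite, zero_mul, mul_zero,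
    Finset.sum_ite_eq, Finset.mem_univ, if_true, Matrix.add_apply, one_apply, collisionMatrix,
    of_apply]
  by_cases hjj : j = j' <;> simp [hjj]

variable [Fintype α] [Fintype β] [Nonempty β]

lemma sum_collisionMatrix_mul_collisionMatrix (p q : α × α) :
    ∑ ω : (α → β) × (α → Bool),
        collisionMatrix ω.1 ω.2 p.1 p.2 * collisionMatrix ω.1 ω.2 q.1 q.2 =
      if p.1 ≠ p.2 ∧ (q = p ∨ q = p.swap) then
        (Fintype.card ((α → β) × (α → Bool)) : ℝ) / Fintype.card β else 0 := by
  obtain ⟨a, b⟩ := p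
  obtain ⟨c, d⟩ := q
  let collides (h : α → β) (j j' : α) : ℝ := if j ≠ j' ∧ h j = h j' then 1 else 0
  have hsplit : ∑ ω : (α → β) × (α → Bool),
        collisionMatrix ω.1 ω.2 a b * collisionMatrix ω.1 ω.2 c d =
      (∑ h : α → β, collides h a b * collides h c d) *
        ∑ s : α → Bool, boolSign (s a) * boolSign (s b) * (boolSign (s c) * boolSign (s d)) := by
    rw [Fintype.sum_prod_type, Finset.sum_mul_sum]
    refine Finset.sum_congr rfl fun h _ => Finset.sum_congr rfl fun s _ => ?_
    simp only [collisionMatrix, of_apply, collides, ite_mul, one_mul, zero_mul, mul_ite, mul_zero]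
  rw [hsplit]
  by_cases hab : a = b
  · simp [collides, hab]
  rw [sum_boolSign_pair_mul_pair hab]
  split_ifs with hmatch hcond hcond
  · have hcollides : ∀ h : α → β, collides h a b * collides h c d =
        if h a = h b then 1 else 0 := by
      rcases hmatch with h | h <;> simp only [Prod.mk.injEq] at h <;> obtain ⟨rfl, rfl⟩ := h <;>
        intro h <;> simp [collides, hab, Ne.symm hab, eq_comm]
    rw [Finset.sum_congr rfl fun h _ => hcollides h, sum_ite_apply_eq_apply hab,
      Fintype.card_prod]
    push_cast
    ring
  · exact absurd ⟨hab, hmatch⟩ hcond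
  · exact absurd hcond.2 hmatch
  · rw [mul_zero]

lemma sum_sq_sum_mul_le {Ω ι : Type*} [Fintype Ω] [Fintype ι] [DecidableEq ι]
    (X : Ω → ι × ι → ℝ) {c : ℝ} (hc : 0 ≤ c)
    (hX : ∀ p q, ∑ ω, X ω p * X ω q = if p.1 ≠ p.2 ∧ (q = p ∨ q = p.swap) then c else 0)
    (a : ι × ι → ℝ) :
    ∑ ω, (∑ p, a p * X ω p) ^ 2 ≤ c * ∑ p, a p * (a p + a p.swap) := by
  have hinner : ∀ p, ∑ q, a q * ∑ ω, X ω p * X ω q =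
      if p.1 = p.2 then 0 else c * (a p + a p.swap) := by
    intro p
    by_cases hp : p.1 = p.2
    · simp [hX, hp]
    have hswap : p.swap ≠ p := fun h => hp (congrArg Prod.fst h.symm)
    simp only [hX, hp, if_false, ne_eq, not_false_eq_true, true_and, mul_ite, mul_zero]
    rw [Finset.sum_ite, Finset.sum_const_zero, add_zero, Finset.filter_or,
      Finset.filter_eq', Finset.filter_eq', Finset.sum_union (by simpa using hswap.symm)]
    simp [mul_add, mul_comm]
  calc ∑ ω, (∑ p, a p * X ω p) ^ 2
      = ∑ p, a p * ∑ q, a q * ∑ ω, X ω p * X ω q := by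
        simp_rw [sq, Fintype.sum_mul_sum]
        rw [Finset.sum_comm]
        refine Finset.sum_congr rfl fun p _ => ?_
        rw [Finset.sum_comm, Finset.mul_sum]
        refine Finset.sum_congr rfl fun q _ => ?_
        rw [Finset.mul_sum, Finset.mul_sum]
        exact Finset.sum_congr rfl fun ω _ => by ring
    _ ≤ ∑ p, c * (a p * (a p + a p.swap)) := by
        refine Finset.sum_le_sum fun p _ => ?_
        rw [hinner]
        split_ifs with hp
        · have : p.swap = p := Prod.ext hp.symm hp
          rw [this]
          nlinarith [sq_nonneg (a p)]
        · linarith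
    _ = c * ∑ p, a p * (a p + a p.swap) := by rw [Finset.mul_sum]

lemma sum_transpose_mul_mul_self_apply {α κ : Type*} [Fintype α] [DecidableEq κ]
    {U : Matrix α κ ℝ} (hU : Uᵀ * U = 1) (k k' : κ) :
    ∑ j, U j k * U j k' = if k = k' then 1 else 0 := by
  simpa [Matrix.mul_apply, Matrix.one_apply] using congrFun (congrFun hU k) k'

lemma sum_frobenius_transpose_mul_collisionMatrix_mul_le {α β κ : Type*} [Fintype α]
    [DecidableEq α] [Fintype β] [DecidableEq β] [Nonempty β] [Fintype κ] [DecidableEq κ]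
    (U : Matrix α κ ℝ) (hU : Uᵀ * U = 1) :
    ∑ ω : (α → β) × (α → Bool), ∑ k, ∑ k', (Uᵀ * collisionMatrix ω.1 ω.2 * U) k k' ^ 2 ≤
      Fintype.card ((α → β) × (α → Bool)) / Fintype.card β *
        ((Fintype.card κ : ℝ) ^ 2 + Fintype.card κ) := by
  set c : ℝ := Fintype.card ((α → β) × (α → Bool)) / Fintype.card β
  have hentry : ∀ (ω : (α → β) × (α → Bool)) k k', (Uᵀ * collisionMatrix ω.1 ω.2 * U) k k' =
      ∑ p : α × α, U p.1 k * U p.2 k' * collisionMatrix ω.1 ω.2 p.1 p.2 := by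
    intro ω k k'
    simp only [Matrix.mul_apply, transpose_apply, Finset.sum_mul, Fintype.sum_prod_type]
    rw [Finset.sum_comm]
    exact Finset.sum_congr rfl fun j _ => Finset.sum_congr rfl fun j' _ => by ring
  have hcoef : ∀ k k', ∑ p : α × α, U p.1 k * U p.2 k' * (U p.1 k * U p.2 k' + U p.2 k * U p.1 k')
      = 1 + if k = k' then 1 else 0 := by
    intro k k'
    have hsplit : ∑ p : α × α, U p.1 k * U p.2 k' * (U p.1 k * U p.2 k' + U p.2 k * U p.1 k')
        = (∑ j, U j k * U j k) * (∑ j, U j k' * U j k') + (∑ j, U j k * U j k') ^ 2 := by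
      simp only [sq, Fintype.sum_mul_sum, Fintype.sum_prod_type, ← Finset.sum_add_distrib]
      exact Finset.sum_congr rfl fun j _ => Finset.sum_congr rfl fun j' _ => by ring
    rw [hsplit, sum_transpose_mul_mul_self_apply hU, sum_transpose_mul_mul_self_apply hU,
      sum_transpose_mul_mul_self_apply hU]
    by_cases hk : k = k' <;> simp [hk]
  have hc : 0 ≤ c := by positivity
  have hX : ∀ p q : α × α, ∑ ω : (α → β) × (α → Bool),
      collisionMatrix ω.1 ω.2 p.1 p.2 * collisionMatrix ω.1 ω.2 q.1 q.2 =
        if p.1 ≠ p.2 ∧ (q = p ∨ q = p.swap) then c else 0 :=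
    sum_collisionMatrix_mul_collisionMatrix
  calc ∑ ω : (α → β) × (α → Bool), ∑ k, ∑ k', (Uᵀ * collisionMatrix ω.1 ω.2 * U) k k' ^ 2
      = ∑ k, ∑ k', ∑ ω : (α → β) × (α → Bool),
          (∑ p : α × α, U p.1 k * U p.2 k' * collisionMatrix ω.1 ω.2 p.1 p.2) ^ 2 := by
        simp only [hentry]
        rw [Finset.sum_comm]
        exact Finset.sum_congr rfl fun k _ => Finset.sum_comm
    _ ≤ ∑ k : κ, ∑ k' : κ, c * (1 + if k = k' then 1 else 0) := by
        refine Finset.sum_le_sum fun k _ => Finset.sum_le_sum fun k' _ => ?_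
        rw [← hcoef k k']
        exact sum_sq_sum_mul_le (fun (ω : (α → β) × (α → Bool)) p =>
          collisionMatrix ω.1 ω.2 p.1 p.2) hc hX fun p => U p.1 k * U p.2 k'
    _ = c * ((Fintype.card κ : ℝ) ^ 2 + Fintype.card κ) := by
        simp [mul_add, Finset.sum_add_distrib, sq]
        ring

lemma abs_sum_mulVec_sq_sub_le {ι κ : Type*} [Fintype ι] [Fintype κ] [DecidableEq κ]
    (A : Matrix ι κ ℝ) {t : ℝ} (ht : 0 ≤ t)
    (hA : ∑ k, ∑ k', (Aᵀ * A - 1 : Matrix κ κ ℝ) k k' ^ 2 ≤ t ^ 2) (x : κ → ℝ) :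
    |∑ i, (A *ᵥ x) i ^ 2 - ∑ k, x k ^ 2| ≤ t * ∑ k, x k ^ 2 := by
  set D := Aᵀ * A - 1
  have hquad : ∑ i, (A *ᵥ x) i ^ 2 - ∑ k, x k ^ 2 = ∑ p : κ × κ, D p.1 p.2 * (x p.1 * x p.2) := by
    have : ∑ i, (A *ᵥ x) i ^ 2 - ∑ k, x k ^ 2 = x ⬝ᵥ (D *ᵥ x) := by
      rw [Matrix.sub_mulVec, Matrix.one_mulVec, dotProduct_sub, ← Matrix.mulVec_mulVec,
        Matrix.dotProduct_mulVec, Matrix.vecMul_transpose]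
      simp only [dotProduct, sq]
    rw [this, Fintype.sum_prod_type]
    simp only [dotProduct, Matrix.mulVec, Finset.mul_sum]
    exact Finset.sum_congr rfl fun k _ => Finset.sum_congr rfl fun k' _ => by ring
  have hx : ∑ p : κ × κ, (x p.1 * x p.2) ^ 2 = (∑ k, x k ^ 2) ^ 2 := by
    simp only [mul_pow, sq (∑ k, x k ^ 2), Fintype.sum_mul_sum, Fintype.sum_prod_type]
  have hcs := Finset.sum_mul_sq_le_sq_mul_sq Finset.univ (fun p : κ × κ => D p.1 p.2)
    fun p => x p.1 * x p.2
  rw [hx, ← hquad, Fintype.sum_prod_type] at hcs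
  refine abs_le_of_sq_le_sq ?_ (by positivity)
  calc _ ≤ _ := hcs
    _ ≤ t ^ 2 * (∑ k, x k ^ 2) ^ 2 := by gcongr
    _ = _ := by ring

lemma sqrt_bounds_of_abs_sub_le {a b ε : ℝ} (hb : 0 ≤ b) (hε : 0 ≤ ε)
    (h : |a - b| ≤ (2 * ε - ε ^ 2) * b) :
    (1 - ε) * √b ≤ √a ∧ √a ≤ (1 + ε) * √b := by
  have hsqrt : ∀ c : ℝ, √(c ^ 2 * b) = |c| * √b := fun c => by
    rw [Real.sqrt_mul (sq_nonneg c), Real.sqrt_sq_eq_abs]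
  obtain ⟨hlow, hhigh⟩ := abs_le.1 h
  constructor
  · calc (1 - ε) * √b ≤ |1 - ε| * √b := by gcongr; exact le_abs_self _
      _ = √((1 - ε) ^ 2 * b) := (hsqrt _).symm
      _ ≤ √a := Real.sqrt_le_sqrt (by nlinarith)
  · calc √a ≤ √((1 + ε) ^ 2 * b) := Real.sqrt_le_sqrt (by nlinarith)
      _ = (1 + ε) * √b := by rw [hsqrt, abs_of_nonneg (by linarith)]

lemma ofReal_one_sub_le_uniformOfFintype_toMeasure {Ω : Type*} [Fintype Ω] [Nonempty Ω]
    [MeasurableSpace Ω] [MeasurableSingletonClass Ω] {f : Ω → ℝ} (hf : ∀ ω, 0 ≤ f ω)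
    {τ δ : ℝ} (hτ : 0 < τ) (hsum : ∑ ω, f ω ≤ δ * τ * Fintype.card Ω) :
    ENNReal.ofReal (1 - δ) ≤ (PMF.uniformOfFintype Ω).toMeasure {ω | f ω ≤ τ} := by
  classical
  have hN : (0 : ℝ) < Fintype.card Ω := by exact_mod_cast Fintype.card_pos
  have hmarkov : ((Finset.univ.filter fun ω => ¬f ω ≤ τ).card : ℝ) * τ ≤ δ * τ * Fintype.card Ω :=
    calc _ = ∑ ω ∈ Finset.univ.filter fun ω => ¬f ω ≤ τ, τ := by simp
      _ ≤ ∑ ω ∈ Finset.univ.filter fun ω => ¬f ω ≤ τ, f ω :=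
        Finset.sum_le_sum fun ω hω => (not_le.1 (Finset.mem_filter.1 hω).2).le
      _ ≤ ∑ ω, f ω := Finset.sum_le_sum_of_subset_of_nonneg (Finset.subset_univ _)
        fun ω _ _ => hf ω
      _ ≤ _ := hsum
  have hcard : ((Finset.univ.filter fun ω => f ω ≤ τ).card : ℝ) +
      (Finset.univ.filter fun ω => ¬f ω ≤ τ).card = Fintype.card Ω := by
    exact_mod_cast Finset.card_filter_add_card_filter_not (s := Finset.univ) fun ω => f ω ≤ τ
  rw [PMF.toMeasure_uniformOfFintype_apply _ (Set.toFinite _).measurableSet,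
    Fintype.card_subtype, ← ENNReal.ofReal_natCast, ← ENNReal.ofReal_natCast,
    ← ENNReal.ofReal_div_of_pos hN]
  refine ENNReal.ofReal_le_ofReal ((le_div_iff₀ hN).2 ?_)
  simp only [Set.mem_ofPred_eq]
  nlinarith

theorem sem_subspace_embedding_general {m l r : ℕ} (hl0 : 0 < l)
    (ε δ : ℝ) (hε : 0 < ε) (hε1 : ε < 1) (hδ : 0 < δ)
    (hl : δ⁻¹ * ((r : ℝ) ^ 2 + r) / (2 * ε - ε ^ 2) ^ 2 ≤ l)
    (U : Matrix (Fin m) (Fin r) ℝ) (hU : Uᵀ * U = 1) :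
    haveI : NeZero l := ⟨hl0.ne'⟩
    ENNReal.ofReal (1 - δ) ≤
      (PMF.uniformOfFintype ((Fin m → Fin l) × (Fin m → Bool))).toMeasure
        {ω | ∀ x : Fin r → ℝ,
          (1 - ε) * Real.sqrt (∑ i, x i ^ 2) ≤
              Real.sqrt (∑ i, ((semOf ω.1 ω.2 * U).mulVec x i) ^ 2) ∧
          Real.sqrt (∑ i, ((semOf ω.1 ω.2 * U).mulVec x i) ^ 2) ≤
              (1 + ε) * Real.sqrt (∑ i, x i ^ 2)} := by
  have : NeZero l := ⟨hl0.ne'⟩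
  set t := 2 * ε - ε ^ 2
  have ht : 0 < t := by nlinarith
  have hgram : ∀ ω : (Fin m → Fin l) × (Fin m → Bool),
      (semOf ω.1 ω.2 * U)ᵀ * (semOf ω.1 ω.2 * U) - 1 = Uᵀ * collisionMatrix ω.1 ω.2 * U := by
    intro ω
    rw [transpose_mul, Matrix.mul_assoc, ← Matrix.mul_assoc (semOf ω.1 ω.2)ᵀ,
      transpose_semOf_mul_semOf, Matrix.add_mul, Matrix.one_mul, Matrix.mul_add, hU,
      add_sub_cancel_left, Matrix.mul_assoc]
  have hr : (r : ℝ) ^ 2 + r ≤ δ * t ^ 2 * l := by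
    rw [div_le_iff₀ (by positivity), inv_mul_le_iff₀ hδ] at hl
    linarith
  have hsum : ∑ ω : (Fin m → Fin l) × (Fin m → Bool),
      ∑ k, ∑ k',
          ((semOf ω.1 ω.2 * U)ᵀ * (semOf ω.1 ω.2 * U) - 1 : Matrix (Fin r) (Fin r) ℝ) k k' ^ 2 ≤
        δ * t ^ 2 * Fintype.card ((Fin m → Fin l) × (Fin m → Bool)) := by
    simp only [hgram]
    refine (sum_frobenius_transpose_mul_collisionMatrix_mul_le U hU).trans ?_
    calc _ ≤ (Fintype.card ((Fin m → Fin l) × (Fin m → Bool)) : ℝ) / l * (δ * t ^ 2 * l) := by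
          simp only [Fintype.card_fin]
          gcongr
      _ = _ := by field_simp
  refine (ofReal_one_sub_le_uniformOfFintype_toMeasure (fun ω => by positivity) (by positivity)
    hsum).trans (MeasureTheory.measure_mono fun ω hω x => ?_)
  exact sqrt_bounds_of_abs_sub_le (by positivity) hε.le
    (abs_sum_mulVec_sq_sub_le _ ht.le hω x)

/-- Theorem 3 of Nelson–Nguyen (OSNAP): for `l ≥ δ⁻¹ (r² + r)/(2ε − ε²)²`, a uniformly
random `l × m` sparse embedding matrix `S` satisfies, with probability at least `1 − δ`,
`(1 − ε)‖x‖₂ ≤ ‖S U x‖₂ ≤ (1 + ε)‖x‖₂` for all `x ∈ ℝʳ`, whenever `U` is an `m × r`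
matrix with orthonormal columns; i.e. all singular values of `S U` lie in `[1−ε, 1+ε]`. -/
theorem sem_subspace_embedding {m l r : ℕ} (hm : 0 < m) (hl0 : 0 < l) (hr : 0 < r)
    (ε δ : ℝ) (hε : 0 < ε) (hε1 : ε < 1) (hδ : 0 < δ) (hδ1 : δ < 1)
    (hl : δ⁻¹ * ((r : ℝ) ^ 2 + r) / (2 * ε - ε ^ 2) ^ 2 ≤ l)
    (U : Matrix (Fin m) (Fin r) ℝ) (hU : Uᵀ * U = 1) :
    haveI : NeZero l := ⟨hl0.ne'⟩
    ENNReal.ofReal (1 - δ) ≤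
      (PMF.uniformOfFintype ((Fin m → Fin l) × (Fin m → Bool))).toMeasure
        {ω | ∀ x : Fin r → ℝ,
          (1 - ε) * Real.sqrt (∑ i, x i ^ 2) ≤
              Real.sqrt (∑ i, ((semOf ω.1 ω.2 * U).mulVec x i) ^ 2) ∧
          Real.sqrt (∑ i, ((semOf ω.1 ω.2 * U).mulVec x i) ^ 2) ≤
              (1 + ε) * Real.sqrt (∑ i, x i ^ 2)} :=
  sem_subspace_embedding_general hl0 ε δ hε hε1 hδ hl U hU
end Collision
end
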